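/- Let n be a positive integer and let G be the subgroup of GL(3,ℂ) generated by E and L_n (the group Δ(3n²)). Then the number of group homomorphisms from G to ℂˣ (equivalently, the number of inequivalent one-dimensional complex irreducible representations of G) is 3 if n is not divisible by 3, and 9 if n is divisible by 3. -/

import Mathlib

/-!
`Δ(3n²)` sits inside the semidirect product `(μₙ × μₙ) ⋊ ℤ/3`, realised in `GL(3, ℂ)` by the
monomial matrices `diag(a, b, (ab)⁻¹) · Eᶜ`; conjugation by `E` acts on the diagonal part as the
rotation `(a, b) ↦ (b, (ab)⁻¹)`. A character `φ` of `Δ(3n²)` is determined by `φ E` and `φ L`, and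
the relations `E³ = (LE)³ = Lⁿ = 1` force `(φ E)³ = 1` and `(φ L) ^ gcd(3, n) = 1`. Conversely each
such pair comes from a character of the semidirect product: `x ^ c` on the `ℤ/3` factor times
`(b / a) ^ j` on the torus, which is rotation invariant as soon as `n ∣ 3j`. Hence there are
`3 · gcd(3, n)` characters.
-/

open Matrix

/-- The matrix `E` with entries `E₀₁ = E₁₂ = E₂₀ = 1` and all other entries `0`. -/
noncomputable def Ematrix : Matrix (Fin 3) (Fin 3) ℂ := !![0, 1, 0; 0, 0, 1; 1, 0, 0]

/-- The matrix `L_n = diag(1, ν, ν⁻¹)` with `ν = exp(2πi/n)`. -/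
noncomputable def Lmatrix (n : ℕ) : Matrix (Fin 3) (Fin 3) ℂ :=
  Matrix.diagonal ![1, Complex.exp (2 * (Real.pi : ℂ) * Complex.I / (n : ℂ)),
    (Complex.exp (2 * (Real.pi : ℂ) * Complex.I / (n : ℂ)))⁻¹]

section ZModPowHom
variable {G : Type*} [Group G] {n : ℕ}

def zmodPowHom (g : G) (hg : g ^ n = 1) : Multiplicative (ZMod n) →* G :=
  AddMonoidHom.toMultiplicativeLeft <|
    ZMod.lift n ⟨zmultiplesHom (Additive G) (Additive.ofMul g), by
      simp only [zmultiplesHom_apply, natCast_zsmul, ← ofMul_pow, hg, ofMul_one]⟩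

lemma zmodPowHom_ofAdd [NeZero n] (g : G) (hg : g ^ n = 1) (c : ZMod n) :
    zmodPowHom g hg (Multiplicative.ofAdd c) = g ^ c.val := by
  conv_lhs => rw [← ZMod.natCast_zmod_val c, ← Int.cast_natCast]
  show Additive.toMul (ZMod.lift n _ ((c.val : ℤ) : ZMod n)) = _
  rw [ZMod.lift_coe]
  exact zpow_natCast g c.val

lemma comp_zmodPowHom_eq {N H : Type*} [Group N] [Group H] [NeZero n] (f : N →* H)
    (σ : MulAut N) (hσ : σ ^ n = 1) (h : H) (hh : h ^ n = 1)
    (hf : ∀ x, f (σ x) = h * f x * h⁻¹) (g : Multiplicative (ZMod n)) :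
    f.comp (zmodPowHom σ hσ g).toMonoidHom =
      (MulAut.conj (zmodPowHom h hh g)).toMonoidHom.comp f := by
  obtain ⟨c, rfl⟩ := Multiplicative.ofAdd.surjective g
  ext x
  simp only [zmodPowHom_ofAdd, MonoidHom.comp_apply, MulEquiv.coe_toMonoidHom,
    MulAut.conj_apply]
  induction c.val with
  | zero => simp
  | succ m ih => rw [pow_succ', MulAut.mul_apply, hf, ih, pow_succ']; group

end ZModPowHom

section ClosureHom
variable {H K M : Type*} [Group H] [Group K] [Monoid M]

lemma card_hom_closure_image {f : H →* K} (hf : Function.Injective f) (s : Set H) :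
    Nat.card (Subgroup.closure (f '' s) →* M) = Nat.card (Subgroup.closure s →* M) :=
  Nat.card_congr <| (MulEquiv.monoidHomCongrLeftEquiv <|
    ((Subgroup.closure s).equivMapOfInjective f hf).trans
      (MulEquiv.subgroupCongr (f.map_closure s))).symm

lemma hom_closure_pair_ext {e l : H} {φ ψ : Subgroup.closure {e, l} →* M}
    (he : φ ⟨e, Subgroup.subset_closure (Set.mem_insert e _)⟩ =
      ψ ⟨e, Subgroup.subset_closure (Set.mem_insert e _)⟩)
    (hl : φ ⟨l, Subgroup.subset_closure (Set.mem_insert_of_mem e rfl)⟩ =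
      ψ ⟨l, Subgroup.subset_closure (Set.mem_insert_of_mem e rfl)⟩) : φ = ψ := by
  refine MonoidHom.eq_of_eqOn_dense Subgroup.closure_closure_coe_preimage ?_
  rintro ⟨x, hx⟩ (h | h)
  · obtain rfl : x = e := h
    exact he
  · obtain rfl : x = l := h
    exact hl

end ClosureHom

noncomputable def diagonalGL {ι R : Type*} [Fintype ι] [DecidableEq ι] [CommRing R] :
    (ι → Rˣ) →* GL ι R :=
  (Units.map (diagonalRingHom ι R).toMonoidHom).comp MulEquiv.piUnits.symm.toMonoidHom

@[simp] lemma val_diagonalGL {ι R : Type*} [Fintype ι] [DecidableEq ι] [CommRing R]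
    (d : ι → Rˣ) : (diagonalGL d : Matrix ι ι R) = diagonal fun i => (d i : R) := rfl

lemma Ematrix_pow_three : Ematrix ^ 3 = 1 := by
  ext i j
  fin_cases i <;> fin_cases j <;> simp [Ematrix, pow_succ, mul_apply, Fin.sum_univ_three]

lemma Ematrix_mul_diagonal (d : Fin 3 → ℂ) :
    Ematrix * diagonal d = diagonal (fun i => d (i + 1)) * Ematrix := by
  ext i j
  fin_cases i <;> fin_cases j <;> simp [Ematrix]

noncomputable def Egl : GL (Fin 3) ℂ :=
  ⟨Ematrix, Ematrix ^ 2, by rw [← pow_succ', Ematrix_pow_three],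
    by rw [← pow_succ, Ematrix_pow_three]⟩

lemma Egl_pow_three : Egl ^ 3 = 1 := Units.ext Ematrix_pow_three

/-- `(a, b)` stands for the diagonal matrix `diag(a, b, (a * b)⁻¹)`. -/
abbrev Delta.Torus (n : ℕ) := rootsOfUnity n ℂ × rootsOfUnity n ℂ

namespace Delta.Torus
variable {n : ℕ}

def rotate : MulAut (Torus n) where
  toFun t := (t.2, (t.1 * t.2)⁻¹)
  invFun t := ((t.1 * t.2)⁻¹, t.1)
  left_inv t := by ext <;> simp
  right_inv t := by ext <;> simp
  map_mul' s t := by ext <;> simp; ring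

lemma rotate_pow_three : (rotate : MulAut (Torus n)) ^ 3 = 1 := by
  ext t <;> simp [pow_succ, rotate]

lemma mul_rotate_mul_rotate (t : Torus n) : t * rotate t * rotate (rotate t) = 1 := by
  ext <;> simp [rotate]

lemma pow_eq_one (t : Torus n) : t ^ n = 1 := by
  ext <;> simpa using (mem_rootsOfUnity' _ _).1 (SetLike.coe_mem _)

def diag : Torus n →* (Fin 3 → ℂˣ) where
  toFun t := ![t.1, t.2, (t.1 * t.2)⁻¹]
  map_one' := by ext i; fin_cases i <;> simp
  map_mul' s t := by ext i; fin_cases i <;> simp; ring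

noncomputable def toGL : Torus n →* GL (Fin 3) ℂ := diagonalGL.comp diag

lemma toGL_rotate (t : Torus n) : toGL (rotate t) = Egl * toGL t * Egl⁻¹ := by
  rw [eq_mul_inv_iff_mul_eq]
  ext1
  simp only [toGL, MonoidHom.comp_apply, Units.val_mul, val_diagonalGL]
  rw [Egl, Units.val_mk, Ematrix_mul_diagonal]
  congr 2
  ext i
  fin_cases i <;> simp [rotate, diag]

def character (j : ℕ) : Torus n →* ℂˣ :=
  (powMonoidHom j).comp
    ((rootsOfUnity n ℂ).subtype.comp (MonoidHom.snd _ _ / MonoidHom.fst _ _))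

lemma character_apply (j : ℕ) (t : Torus n) :
    character j t = ((t.2 / t.1 : rootsOfUnity n ℂ) : ℂˣ) ^ j := rfl

lemma character_rotate {j : ℕ} (hj : n ∣ 3 * j) (t : Torus n) :
    character j (rotate t) = character j t := by
  obtain ⟨k, hk⟩ := hj
  have hb : ((t.2 : ℂˣ) ^ j) ^ 3 = 1 := by
    rw [← pow_mul, mul_comm, hk, pow_mul, (mem_rootsOfUnity _ _).1 t.2.2, one_pow]
  have hrot : ((t.1 * t.2 : ℂˣ)⁻¹ / t.2) = t.2 / t.1 * ((t.2 : ℂˣ) ^ 3)⁻¹ := by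
    ext
    push_cast
    field_simp
  simp only [character_apply, rotate, MulEquiv.coe_mk, Equiv.coe_fn_mk]
  push_cast
  rw [hrot, mul_pow, inv_pow, pow_right_comm, hb, inv_one, mul_one]

end Delta.Torus

abbrev Delta (n : ℕ) :=
  Delta.Torus n ⋊[zmodPowHom Delta.Torus.rotate Delta.Torus.rotate_pow_three]
    Multiplicative (ZMod 3)

namespace Delta
variable {n : ℕ}

noncomputable def toGL : Delta n →* GL (Fin 3) ℂ :=
  SemidirectProduct.lift Torus.toGL (zmodPowHom Egl Egl_pow_three)
    (comp_zmodPowHom_eq _ _ _ _ _ Torus.toGL_rotate)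

lemma toGL_mk (t : Torus n) (c : ZMod 3) :
    toGL ⟨t, .ofAdd c⟩ = Torus.toGL t * Egl ^ c.val := by
  simp [toGL, SemidirectProduct.lift, zmodPowHom_ofAdd]

lemma toGL_injective : Function.Injective (toGL : Delta n →* GL (Fin 3) ℂ) := by
  refine (injective_iff_map_eq_one _).2 fun ⟨t, g⟩ h => ?_
  obtain ⟨c, rfl⟩ := Multiplicative.ofAdd.surjective g
  have h' : diagonal (fun i => (Torus.diag t i : ℂ)) * Ematrix ^ c.val = 1 := by
    rw [toGL_mk] at h
    simpa [Torus.toGL, Egl] using congrArg Units.val h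
  -- `Eᶜ` has a zero `(0, 0)` entry unless `c = 0`.
  have hc : c.val = 0 := by
    have h00 := congrFun (congrFun h' 0) 0
    have := ZMod.val_lt c
    interval_cases c.val
    · rfl
    all_goals simp [Ematrix, pow_succ, mul_apply, Fin.sum_univ_three] at h00
  rw [hc, pow_zero, mul_one] at h'
  have h00 := congrFun (congrFun h' 0) 0
  have h11 := congrFun (congrFun h' 1) 1
  simp [Torus.diag] at h00 h11
  rw [ZMod.val_eq_zero] at hc
  ext <;> simp [h00, h11, hc]

def genE : Delta n := SemidirectProduct.inr (.ofAdd 1)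

lemma genE_pow_three : (genE : Delta n) ^ 3 = 1 := by
  rw [genE, ← map_pow, ← ofAdd_nsmul]
  exact map_one _

lemma genE_mul_inl_mul_genE_inv (t : Torus n) :
    genE * SemidirectProduct.inl t * genE⁻¹ =
      (SemidirectProduct.inl (Torus.rotate t) : Delta n) := by
  rw [genE, ← map_inv, ← SemidirectProduct.inl_aut, zmodPowHom_ofAdd]
  rfl

lemma inl_mul_genE_pow_three (t : Torus n) :
    (SemidirectProduct.inl t * genE : Delta n) ^ 3 = 1 := by
  set T : Torus n →* Delta n := SemidirectProduct.inl
  calc (T t * genE) ^ 3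
      = T t * (genE * T t * genE⁻¹) * (genE * (genE * T t * genE⁻¹) * genE⁻¹) * genE ^ 3 := by
        simp only [pow_succ, pow_zero, one_mul]
        group
    _ = T (t * Torus.rotate t * Torus.rotate (Torus.rotate t)) := by
        rw [genE_mul_inl_mul_genE_inv, genE_mul_inl_mul_genE_inv, genE_pow_three, mul_one,
          map_mul, map_mul]
    _ = 1 := by rw [Torus.mul_rotate_mul_rotate, map_one]

lemma toGL_genE : toGL (genE : Delta n) = Egl :=
  (toGL_mk 1 1).trans (by rw [map_one, one_mul, ZMod.val_one, pow_one])

def character (x : ℂˣ) (hx : x ^ 3 = 1) (j : ℕ) (hj : n ∣ 3 * j) : Delta n →* ℂˣ :=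
  SemidirectProduct.lift (Torus.character j) (zmodPowHom x hx)
    (comp_zmodPowHom_eq _ _ _ _ _ fun t => by
      rw [Torus.character_rotate hj, mul_inv_cancel_comm])

lemma character_genE {x : ℂˣ} (hx : x ^ 3 = 1) {j : ℕ} (hj : n ∣ 3 * j) :
    character x hx j hj genE = x := by
  rw [character, genE, SemidirectProduct.lift_inr, zmodPowHom_ofAdd, ZMod.val_one, pow_one]

lemma character_inl {x : ℂˣ} (hx : x ^ 3 = 1) {j : ℕ} (hj : n ∣ 3 * j) (t : Torus n) :
    character x hx j hj (SemidirectProduct.inl t) = Torus.character j t :=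
  SemidirectProduct.lift_inl _ _ _ _

variable [NeZero n]

noncomputable def nu : rootsOfUnity n ℂ :=
  (Complex.isPrimitiveRoot_exp n (NeZero.ne n)).toRootsOfUnity

lemma isPrimitiveRoot_nu : IsPrimitiveRoot (((nu : rootsOfUnity n ℂ) : ℂˣ) : ℂ) n := by
  rw [nu, IsPrimitiveRoot.val_toRootsOfUnity_coe]
  exact Complex.isPrimitiveRoot_exp n (NeZero.ne n)

noncomputable def genL : Delta n := SemidirectProduct.inl (1, nu)

lemma genL_pow : (genL : Delta n) ^ n = 1 := by
  rw [genL, ← map_pow, Torus.pow_eq_one, map_one]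

lemma toGL_genL : (toGL (genL : Delta n) : Matrix (Fin 3) (Fin 3) ℂ) = Lmatrix n := by
  rw [genL, toGL, SemidirectProduct.lift_inl, Torus.toGL, MonoidHom.comp_apply, val_diagonalGL,
    Lmatrix]
  congr 1
  ext i
  fin_cases i <;> simp [Torus.diag, nu]

lemma exists_character {x y : ℂˣ} (hx : x ^ 3 = 1) (hy : y ^ Nat.gcd 3 n = 1) :
    ∃ χ : Delta n →* ℂˣ, χ genE = x ∧ χ genL = y := by
  obtain ⟨hy3, hyn⟩ := pow_gcd_eq_one.1 hy
  obtain ⟨j, -, hj⟩ := (isPrimitiveRoot_nu (n := n)).eq_pow_of_pow_eq_one (ξ := (y : ℂ))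
    (by rw [← Units.val_pow_eq_pow_val, hyn, Units.val_one])
  have hdvd : n ∣ 3 * j := ((isPrimitiveRoot_nu (n := n)).pow_eq_one_iff_dvd _).1 <| by
    rw [pow_mul', hj, ← Units.val_pow_eq_pow_val, hy3, Units.val_one]
  refine ⟨character x hx j hdvd, character_genE hx hdvd, ?_⟩
  rw [genL, character_inl, Torus.character_apply]
  ext
  simpa using hj

lemma card_hom_closure :
    Nat.card (Subgroup.closure ({genE, genL} : Set (Delta n)) →* ℂˣ) = 3 * Nat.gcd 3 n := by
  set G := Subgroup.closure ({genE, genL} : Set (Delta n))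
  have memE : genE ∈ G := Subgroup.subset_closure (Set.mem_insert _ _)
  have memL : genL ∈ G := Subgroup.subset_closure (Set.mem_insert_of_mem _ rfl)
  have hE : (⟨genE, memE⟩ : G) ^ 3 = 1 := Subtype.ext genE_pow_three
  have hL : (⟨genL, memL⟩ : G) ^ n = 1 := Subtype.ext genL_pow
  have hLE : (⟨genL, memL⟩ * ⟨genE, memE⟩ : G) ^ 3 = 1 := Subtype.ext (inl_mul_genE_pow_three _)
  have values (φ : G →* ℂˣ) :
      φ ⟨genE, memE⟩ ∈ rootsOfUnity 3 ℂ ∧ φ ⟨genL, memL⟩ ∈ rootsOfUnity (Nat.gcd 3 n) ℂ := by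
    have hφE : φ ⟨genE, memE⟩ ^ 3 = 1 := by rw [← map_pow, hE, map_one]
    have hφL : φ ⟨genL, memL⟩ ^ 3 = 1 := calc
      _ = φ ⟨genL, memL⟩ ^ 3 * φ ⟨genE, memE⟩ ^ 3 := by rw [hφE, mul_one]
      _ = 1 := by rw [← mul_pow, ← map_mul, ← map_pow, hLE, map_one]
    refine ⟨hφE, pow_gcd_eq_one.2 ⟨hφL, ?_⟩⟩
    rw [← map_pow, hL, map_one]
  let F (φ : G →* ℂˣ) : rootsOfUnity 3 ℂ × rootsOfUnity (Nat.gcd 3 n) ℂ :=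
    (⟨_, (values φ).1⟩, ⟨_, (values φ).2⟩)
  have hF : F.Bijective := by
    refine ⟨fun φ ψ h => hom_closure_pair_ext ?_ ?_, fun ⟨⟨x, hx⟩, ⟨y, hy⟩⟩ => ?_⟩
    · exact congrArg (fun p => (p.1 : ℂˣ)) h
    · exact congrArg (fun p => (p.2 : ℂˣ)) h
    obtain ⟨χ, hχE, hχL⟩ :=
      exists_character ((mem_rootsOfUnity _ _).1 hx) ((mem_rootsOfUnity _ _).1 hy)
    exact ⟨χ.comp G.subtype, Prod.ext (Subtype.ext hχE) (Subtype.ext hχL)⟩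
  have : NeZero (Nat.gcd 3 n) := ⟨(Nat.gcd_pos_of_pos_left n three_pos).ne'⟩
  rw [Nat.card_congr (Equiv.ofBijective F hF), Nat.card_prod, Complex.card_rootsOfUnity,
    Complex.card_rootsOfUnity]

end Delta

/-- The group `Δ(3n²)`, generated by `E` and `L_n` inside `GL(3,ℂ)`, has `3` one-dimensional
irreducible representations (i.e. homomorphisms into `ℂˣ`) if `3 ∤ n`, and `9` if `3 ∣ n`. -/
theorem delta_3n2_singlets (n : ℕ) (hn : 0 < n) (E L : GL (Fin 3) ℂ)
    (hE : E.val = Ematrix) (hL : L.val = Lmatrix n) :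
    Nat.card (↥(Subgroup.closure ({E, L} : Set (GL (Fin 3) ℂ))) →* ℂˣ)
      = if 3 ∣ n then 9 else 3 := by
  have : NeZero n := ⟨hn.ne'⟩
  obtain rfl : E = Delta.toGL (Delta.genE (n := n)) :=
    Units.ext (hE.trans (congrArg Units.val Delta.toGL_genE).symm)
  obtain rfl : L = Delta.toGL (Delta.genL (n := n)) :=
    Units.ext (hL.trans Delta.toGL_genL.symm)
  rw [← Set.image_pair, card_hom_closure_image Delta.toGL_injective, Delta.card_hom_closure]
  split_ifs with h
  · rw [Nat.gcd_eq_left h]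
  · rw [((Nat.Prime.coprime_iff_not_dvd Nat.prime_three).2 h).gcd_eq_one]
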